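/- Let G be a simple graph on n vertices, θ ∈ ℝ^n a second-order stationary point of the Kuramoto energy E_G, and W = Q ⊎ P disjoint vertex subsets with Q nonempty such that every i ∈ Q is adjacent to every vertex of P and N(i) \ P ⊆ Q for all i ∈ Q, and all phasors of Q equal a common unit vector v (v_i = v for all i ∈ Q, where v_k = (cos θ_k, sin θ_k)). Then any two adjacent vertices a, b ∈ Q are geometric closed twins with respect to q = Σ_{j ∈ (P ∪ Q) \ {a,b}, j ∈ N(a)} v_j in the stable sense: v_b + Σ_{i ∈ P} v_i is a nonnegative multiple of v_a or zero, and v_a + Σ_{i ∈ P} v_i is a nonnegative multiple of v_b or zero. -/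

import Mathlib

open Finset

/-- The phasor of vertex `i` at state `θ`: the unit vector `(cos θᵢ, sin θᵢ) ∈ ℝ²`. -/
noncomputable def phasor {V : Type*} (θ : V → ℝ) (i : V) : ℝ × ℝ :=
  (Real.cos (θ i), Real.sin (θ i))

/-- The Kuramoto energy `E_G(θ) = (1/2)·Σ_{i,j} A_{ij}(1 − cos(θ_i − θ_j))`. -/
noncomputable def kuramotoEnergy {V : Type*} [Fintype V] (G : SimpleGraph V)
    [DecidableRel G.Adj] (θ : V → ℝ) : ℝ :=
  (1 / 2) * ∑ i, ∑ j, (if G.Adj i j then (1 : ℝ) else 0) * (1 - Real.cos (θ i - θ j))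

/-- The Hessian of the Kuramoto energy at `θ`: off-diagonal entries
`−A_{ij} cos(θ_i − θ_j)` and diagonal entries `Σ_{k ≠ i} A_{ik} cos(θ_i − θ_k)`. -/
noncomputable def kuramotoHessian {V : Type*} [Fintype V] [DecidableEq V] (G : SimpleGraph V)
    [DecidableRel G.Adj] (θ : V → ℝ) : Matrix V V ℝ :=
  Matrix.of fun i j =>
    if i = j then ∑ k ∈ Finset.univ.erase i, (if G.Adj i k then Real.cos (θ i - θ k) else 0)
    else -(if G.Adj i j then Real.cos (θ i - θ j) else 0)

/-- `θ` is a second-order stationary point of the Kuramoto energy: the gradient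
`(∇E_G(θ))_i = Σ_j A_{ij} sin(θ_i − θ_j)` vanishes and the Hessian is positive
semidefinite. -/
def IsSOSP {V : Type*} [Fintype V] [DecidableEq V] (G : SimpleGraph V)
    [DecidableRel G.Adj] (θ : V → ℝ) : Prop :=
  (∀ i, ∑ j, (if G.Adj i j then (1 : ℝ) else 0) * Real.sin (θ i - θ j) = 0) ∧
  (kuramotoHessian G θ).PosSemidef

/-!
At a second-order stationary point, the gradient at `a` sees only `P`, since the other neighbours
of `a` share its phasor; so `Σ_{i ∈ P} v_i` is parallel to `v`. Testing the positive semidefinite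
Hessian against the indicator of `Q` leaves only the edges from `Q` to `P`, which gives
`|Q| ⟪v, Σ_{i ∈ P} v_i⟫ ≥ 0`. Hence `v + Σ_{i ∈ P} v_i` is a nonnegative multiple of `v`.
-/

theorem Matrix.PosSemidef.sum_sum_nonneg {ι : Type*} [Fintype ι] {M : Matrix ι ι ℝ}
    (hM : M.PosSemidef) (s : Finset ι) : 0 ≤ ∑ i ∈ s, ∑ j ∈ s, M i j := by
  classical
  have h := hM.dotProduct_mulVec_nonneg (fun i => if i ∈ s then 1 else 0)
  simpa [dotProduct, Matrix.mulVec, Finset.sum_ite_mem] using h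

theorem Prod.exists_nonneg_add_eq_smul {v S : ℝ × ℝ} (hv : v.1 ^ 2 + v.2 ^ 2 = 1)
    (hcross : v.2 * S.1 - v.1 * S.2 = 0) (hdot : 0 ≤ v.1 * S.1 + v.2 * S.2) :
    ∃ lam : ℝ, 0 ≤ lam ∧ v + S = lam • v := by
  refine ⟨1 + (v.1 * S.1 + v.2 * S.2), by linarith, Prod.ext ?_ ?_⟩
  · simp only [Prod.fst_add, Prod.smul_fst, smul_eq_mul]
    linear_combination (-S.1) * hv + v.2 * hcross
  · simp only [Prod.snd_add, Prod.smul_snd, smul_eq_mul]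
    linear_combination (-S.2) * hv - v.1 * hcross

section Phasor

variable {V : Type*} (θ : V → ℝ)

theorem sum_sin_sub_eq (i : V) (s : Finset V) :
    ∑ j ∈ s, Real.sin (θ i - θ j) =
      (phasor θ i).2 * (∑ j ∈ s, phasor θ j).1 - (phasor θ i).1 * (∑ j ∈ s, phasor θ j).2 := by
  simp only [phasor, Prod.fst_sum, Prod.snd_sum, Real.sin_sub, Finset.mul_sum,
    ← Finset.sum_sub_distrib]

theorem sum_cos_sub_eq (i : V) (s : Finset V) :
    ∑ j ∈ s, Real.cos (θ i - θ j) =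
      (phasor θ i).1 * (∑ j ∈ s, phasor θ j).1 + (phasor θ i).2 * (∑ j ∈ s, phasor θ j).2 := by
  simp only [phasor, Prod.fst_sum, Prod.snd_sum, Real.cos_sub, Finset.mul_sum,
    ← Finset.sum_add_distrib]

theorem sin_sub_eq_zero_of_phasor_eq {i j : V} (h : phasor θ j = phasor θ i) :
    Real.sin (θ i - θ j) = 0 := by
  have h1 : Real.cos (θ j) = Real.cos (θ i) := congrArg Prod.fst h
  have h2 : Real.sin (θ j) = Real.sin (θ i) := congrArg Prod.snd h
  rw [Real.sin_sub, h1, h2, mul_comm, sub_self]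

end Phasor

theorem SimpleGraph.neighborFinset_sdiff_eq_of_subset {V : Type*} [DecidableEq V]
    {G : SimpleGraph V} {i : V} [Fintype (G.neighborSet i)] {Q P : Finset V} (hi : i ∈ Q)
    (hQP : ∀ j ∈ Q, ∀ p ∈ P, G.Adj j p) (hQQ : G.neighborFinset i \ P ⊆ Q) :
    G.neighborFinset i \ Q = P := by
  ext j
  simp only [Finset.mem_sdiff, SimpleGraph.mem_neighborFinset]
  refine ⟨fun ⟨hij, hjQ⟩ => ?_, fun hj => ⟨hQP i hi j hj, fun hjQ => G.irrefl (hQP j hjQ j hj)⟩⟩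
  by_contra hjP
  exact hjQ (hQQ (by simp [hij, hjP]))

section Kuramoto

variable {V : Type*} [Fintype V] [DecidableEq V] {G : SimpleGraph V} [DecidableRel G.Adj]
  {θ : V → ℝ}

theorem sum_compl_ite_adj (f : V → ℝ) (i : V) (Q : Finset V) :
    ∑ j ∈ Qᶜ, (if G.Adj i j then f j else 0) = ∑ j ∈ G.neighborFinset i \ Q, f j := by
  rw [Finset.sum_ite, Finset.sum_const_zero, add_zero]
  congr 1
  ext j
  simp [and_comm]

theorem kuramotoHessian_sum_row (i : V) : ∑ j, kuramotoHessian G θ i j = 0 := by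
  rw [← Finset.add_sum_erase _ _ (Finset.mem_univ i)]
  have hoff : ∀ j ∈ univ.erase i, kuramotoHessian G θ i j =
      -(if G.Adj i j then Real.cos (θ i - θ j) else 0) := fun j hj => by
    simp [kuramotoHessian, (Finset.ne_of_mem_erase hj).symm]
  have hdiag : kuramotoHessian G θ i i =
      ∑ j ∈ univ.erase i, if G.Adj i j then Real.cos (θ i - θ j) else 0 := by
    simp [kuramotoHessian]
  rw [Finset.sum_congr rfl hoff, Finset.sum_neg_distrib, hdiag, add_neg_cancel]

theorem kuramotoHessian_sum_mem {Q : Finset V} {i : V} (hi : i ∈ Q) :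
    ∑ j ∈ Q, kuramotoHessian G θ i j = ∑ j ∈ G.neighborFinset i \ Q, Real.cos (θ i - θ j) := by
  have hoff : ∀ j ∈ Qᶜ, kuramotoHessian G θ i j =
      -(if G.Adj i j then Real.cos (θ i - θ j) else 0) := fun j hj => by
    have hij : i ≠ j := fun h => Finset.mem_compl.mp hj (h ▸ hi)
    simp [kuramotoHessian, hij]
  have hrow := Finset.sum_add_sum_compl Q (kuramotoHessian G θ i)
  rw [kuramotoHessian_sum_row, Finset.sum_congr rfl hoff, Finset.sum_neg_distrib,
    sum_compl_ite_adj] at hrow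
  linarith

theorem IsSOSP.sum_sin_sdiff_eq_zero (hθ : IsSOSP G θ) {Q : Finset V} {i : V}
    (hsync : ∀ j ∈ Q, phasor θ j = phasor θ i) :
    ∑ j ∈ G.neighborFinset i \ Q, Real.sin (θ i - θ j) = 0 := by
  have hgrad := hθ.1 i
  rw [← Finset.sum_add_sum_compl Q, Finset.sum_eq_zero, zero_add] at hgrad
  · simpa only [ite_mul, one_mul, zero_mul, sum_compl_ite_adj] using hgrad
  · intro j hj
    rw [sin_sub_eq_zero_of_phasor_eq θ (hsync j hj), mul_zero]

theorem IsSOSP.sum_cos_sdiff_nonneg (hθ : IsSOSP G θ) (Q : Finset V) :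
    0 ≤ ∑ i ∈ Q, ∑ j ∈ G.neighborFinset i \ Q, Real.cos (θ i - θ j) := by
  rw [← Finset.sum_congr rfl fun i hi => kuramotoHessian_sum_mem hi]
  exact hθ.2.sum_sum_nonneg Q

end Kuramoto

theorem stmt_15_general {n : ℕ} (G : SimpleGraph (Fin n)) [DecidableRel G.Adj] (θ : Fin n → ℝ)
    (hθ : IsSOSP G θ)
    (Q P : Finset (Fin n))
    (hQP : ∀ i ∈ Q, ∀ p ∈ P, G.Adj i p)
    (hQQ : ∀ i ∈ Q, G.neighborFinset i \ P ⊆ Q)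
    (v : ℝ × ℝ) (hv : v.1 ^ 2 + v.2 ^ 2 = 1)
    (hsync : ∀ i ∈ Q, phasor θ i = v)
    (a b : Fin n) (ha : a ∈ Q) (hb : b ∈ Q) :
    (∃ lam : ℝ, 0 ≤ lam ∧ phasor θ b + ∑ i ∈ P, phasor θ i = lam • phasor θ a) ∧
    (∃ lam : ℝ, 0 ≤ lam ∧ phasor θ a + ∑ i ∈ P, phasor θ i = lam • phasor θ b) := by
  set S := ∑ i ∈ P, phasor θ i
  have hboundary : ∀ i ∈ Q, G.neighborFinset i \ Q = P := fun i hi =>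
    SimpleGraph.neighborFinset_sdiff_eq_of_subset hi hQP (hQQ i hi)
  have hcross : v.2 * S.1 - v.1 * S.2 = 0 := by
    have h := hθ.sum_sin_sdiff_eq_zero (i := a) fun j hj => (hsync j hj).trans (hsync a ha).symm
    rwa [hboundary a ha, sum_sin_sub_eq, hsync a ha] at h
  have hdot : 0 ≤ v.1 * S.1 + v.2 * S.2 := by
    have h := hθ.sum_cos_sdiff_nonneg Q
    rw [Finset.sum_congr rfl fun i hi => by rw [hboundary i hi, sum_cos_sub_eq, hsync i hi],
      Finset.sum_const, nsmul_eq_mul] at h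
    exact nonneg_of_mul_nonneg_right h (by exact_mod_cast Finset.card_pos.mpr ⟨a, ha⟩)
  obtain ⟨lam, hlam, hS⟩ := Prod.exists_nonneg_add_eq_smul hv hcross hdot
  rw [hsync a ha, hsync b hb]
  exact ⟨⟨lam, hlam, hS⟩, ⟨lam, hlam, hS⟩⟩

/-- At a second-order stationary point `θ`, given disjoint subsets `Q` (nonempty) and `P`
with every `i ∈ Q` adjacent to all of `P` and `N(i) \ P ⊆ Q`, and all phasors of `Q`
equal to a common unit vector `v`, any two adjacent vertices `a, b ∈ Q` are geometric
closed twins in the stable sense: `v_b + Σ_{i ∈ P} v_i` is a nonnegative multiple of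
`v_a` (possibly zero), and `v_a + Σ_{i ∈ P} v_i` is a nonnegative multiple of `v_b`. -/
theorem stmt_15 {n : ℕ} (G : SimpleGraph (Fin n)) [DecidableRel G.Adj] (θ : Fin n → ℝ)
    (hθ : IsSOSP G θ)
    (Q P : Finset (Fin n)) (hdisj : Disjoint Q P) (hQ : Q.Nonempty)
    (hQP : ∀ i ∈ Q, ∀ p ∈ P, G.Adj i p)
    (hQQ : ∀ i ∈ Q, G.neighborFinset i \ P ⊆ Q)
    (v : ℝ × ℝ) (hv : v.1 ^ 2 + v.2 ^ 2 = 1)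
    (hsync : ∀ i ∈ Q, phasor θ i = v)
    (a b : Fin n) (ha : a ∈ Q) (hb : b ∈ Q) (hab : G.Adj a b) :
    (∃ lam : ℝ, 0 ≤ lam ∧ phasor θ b + ∑ i ∈ P, phasor θ i = lam • phasor θ a) ∧
    (∃ lam : ℝ, 0 ≤ lam ∧ phasor θ a + ∑ i ∈ P, phasor θ i = lam • phasor θ b) :=
  stmt_15_general G θ hθ Q P hQP hQQ v hv hsync a b ha hb
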